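/- In the RURV setting (exact arithmetic), suppose σ_{r+1} < f·σ_r, where f = σ_min(X₁₁) and X₁₁ = X(1:r,1:r) (so in particular σ_r > 0 and f > 0). Then the trailing (n−r)×(n−r) block of R satisfies σ_{r+1} ≤ σ_max(R(r+1:n, r+1:n)) ≤ 3·σ_{r+1} · f⁻⁴·(σ₁/σ_r)³ / (1 − σ_{r+1}²/(f²·σ_r²)). -/

import Mathlib

/-!
Since `U` is orthogonal, `R = (UᵀP) Σ X` with `X = QᵀVᵀ`, both outer factors orthogonal, and the
lower-left block of `R` vanishes.

Upper bound: inverting `X₁₁` (possible as `f > 0`) extends every trailing vector `x` to `y = (z, x)`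
with `Xy` supported on the trailing coordinates and `f‖z‖ ≤ ‖X₁₂x‖ ≤ ‖x‖`. Then `R₂₂x` is the
trailing part of `Ry = (UᵀP) Σ (Xy)`, so `‖R₂₂x‖ ≤ σ_{r+1}‖y‖ ≤ σ_{r+1}(1 + f⁻¹)‖x‖`; since
`f ≤ 1` this is below the stated bound.

Lower bound (Courant–Fischer): the kernel of `v ↦ (Rv)₁` has dimension at least `n - r`, so it
contains a nonzero `v` in the span of the top `r + 1` right singular vectors. For it,
`σ_{r+1}‖v‖ ≤ ‖Rv‖ = ‖R₂₂v₂‖ ≤ σ_max(R₂₂)‖v‖`.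
-/

open Matrix

/-- The Euclidean norm of a real vector. -/
noncomputable def euclNorm {n : Type*} [Fintype n] (v : n → ℝ) : ℝ :=
  Real.sqrt (v ⬝ᵥ v)

/-- The smallest singular value of a real matrix: the infimum of `‖M·x‖₂` over
Euclidean-unit vectors `x`. -/
noncomputable def sigmaMin {m n : Type*} [Fintype m] [Fintype n]
    (M : Matrix m n ℝ) : ℝ :=
  sInf {t | ∃ x : n → ℝ, euclNorm x = 1 ∧ t = euclNorm (M *ᵥ x)}

/-- The largest singular value (ℓ² operator norm) of a real matrix: the supremum
of `‖M·x‖₂` over Euclidean-unit vectors `x`. -/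
noncomputable def sigmaMax {m n : Type*} [Fintype m] [Fintype n]
    (M : Matrix m n ℝ) : ℝ :=
  sSup {t | ∃ x : n → ℝ, euclNorm x = 1 ∧ t = euclNorm (M *ᵥ x)}

section euclNorm

variable {m k : Type*} [Fintype m] [Fintype k]

theorem euclNorm_eq_norm (v : m → ℝ) : euclNorm v = ‖WithLp.toLp 2 v‖ := by
  simp [euclNorm, EuclideanSpace.norm_eq, dotProduct, sq]

theorem euclNorm_nonneg (v : m → ℝ) : 0 ≤ euclNorm v := Real.sqrt_nonneg _

theorem euclNorm_zero : euclNorm (0 : m → ℝ) = 0 := by simp [euclNorm]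

theorem euclNorm_pos {v : m → ℝ} (hv : v ≠ 0) : 0 < euclNorm v := by
  simpa [euclNorm_eq_norm] using hv

theorem euclNorm_neg (v : m → ℝ) : euclNorm (-v) = euclNorm v := by
  simp [euclNorm_eq_norm]

theorem euclNorm_smul (c : ℝ) (v : m → ℝ) : euclNorm (c • v) = |c| * euclNorm v := by
  simp [euclNorm_eq_norm, norm_smul]

theorem euclNorm_inv_smul_self {v : m → ℝ} (hv : v ≠ 0) : euclNorm ((euclNorm v)⁻¹ • v) = 1 := by
  rw [euclNorm_smul, abs_inv, abs_of_nonneg (euclNorm_nonneg v),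
    inv_mul_cancel₀ (euclNorm_pos hv).ne']

theorem sq_euclNorm (v : m → ℝ) : euclNorm v ^ 2 = ∑ i, v i ^ 2 := by
  rw [euclNorm_eq_norm, EuclideanSpace.norm_eq, Real.sq_sqrt (by positivity)]
  simp

theorem mul_euclNorm_le_mul_euclNorm_iff {u : m → ℝ} {v : k → ℝ} {a b : ℝ} (ha : 0 ≤ a)
    (hb : 0 ≤ b) :
    a * euclNorm u ≤ b * euclNorm v ↔ a ^ 2 * ∑ i, u i ^ 2 ≤ b ^ 2 * ∑ i, v i ^ 2 := by
  rw [← pow_le_pow_iff_left₀ (by positivity [euclNorm_nonneg u]) (by positivity [euclNorm_nonneg v])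
    two_ne_zero, mul_pow, mul_pow, sq_euclNorm, sq_euclNorm]

theorem euclNorm_comp_equiv (v : m → ℝ) (e : k ≃ m) : euclNorm (v ∘ e) = euclNorm v := by
  simp only [euclNorm, dotProduct, Function.comp_apply, e.sum_comp (fun i => v i * v i)]

theorem euclNorm_mulVec_of_transpose_mul_self [DecidableEq k] {M : Matrix m k ℝ}
    (hM : Mᵀ * M = 1) (x : k → ℝ) : euclNorm (M *ᵥ x) = euclNorm x := by
  rw [euclNorm, euclNorm, dotProduct_mulVec, vecMul_mulVec, hM, vecMul_one]

theorem euclNorm_diagonal_mulVec_le [DecidableEq m] {d u : m → ℝ} {s : ℝ} (hs : 0 ≤ s)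
    (h : ∀ i, u i ≠ 0 → |d i| ≤ s) : euclNorm (diagonal d *ᵥ u) ≤ s * euclNorm u := by
  rw [← one_mul (euclNorm _), mul_euclNorm_le_mul_euclNorm_iff zero_le_one hs, one_pow, one_mul,
    Finset.mul_sum]
  refine Finset.sum_le_sum fun i _ => ?_
  rw [mulVec_diagonal, mul_pow]
  by_cases hu : u i = 0
  · simp [hu]
  · exact mul_le_mul_of_nonneg_right (sq_le_sq' (abs_le.1 (h i hu)).1 (abs_le.1 (h i hu)).2)
      (sq_nonneg _)

theorem mul_euclNorm_le_euclNorm_diagonal_mulVec [DecidableEq m] {d u : m → ℝ} {s : ℝ}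
    (hs : 0 ≤ s) (h : ∀ i, u i ≠ 0 → s ≤ d i) : s * euclNorm u ≤ euclNorm (diagonal d *ᵥ u) := by
  rw [← one_mul (euclNorm (diagonal d *ᵥ u)), mul_euclNorm_le_mul_euclNorm_iff hs zero_le_one,
    one_pow, one_mul, Finset.mul_sum]
  refine Finset.sum_le_sum fun i _ => ?_
  rw [mulVec_diagonal, mul_pow]
  by_cases hu : u i = 0
  · simp [hu]
  · exact mul_le_mul_of_nonneg_right (pow_le_pow_left₀ hs (h i hu) 2) (sq_nonneg _)

end euclNorm

section Sum

variable {a b : Type*} [Fintype a] [Fintype b]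

theorem sq_euclNorm_eq_add (v : a ⊕ b → ℝ) :
    euclNorm v ^ 2 = euclNorm (v ∘ Sum.inl) ^ 2 + euclNorm (v ∘ Sum.inr) ^ 2 := by
  simp only [sq_euclNorm, Fintype.sum_sum_type, Function.comp_apply]

theorem euclNorm_comp_inl_le (v : a ⊕ b → ℝ) : euclNorm (v ∘ Sum.inl) ≤ euclNorm v :=
  (pow_le_pow_iff_left₀ (euclNorm_nonneg _) (euclNorm_nonneg _) two_ne_zero).1 <| by
    rw [sq_euclNorm_eq_add v]; exact le_add_of_nonneg_right (sq_nonneg _)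

theorem euclNorm_comp_inr_le (v : a ⊕ b → ℝ) : euclNorm (v ∘ Sum.inr) ≤ euclNorm v :=
  (pow_le_pow_iff_left₀ (euclNorm_nonneg _) (euclNorm_nonneg _) two_ne_zero).1 <| by
    rw [sq_euclNorm_eq_add v]; exact le_add_of_nonneg_left (sq_nonneg _)

theorem euclNorm_sumElim_le (u : a → ℝ) (w : b → ℝ) :
    euclNorm (Sum.elim u w) ≤ euclNorm u + euclNorm w :=
  (pow_le_pow_iff_left₀ (euclNorm_nonneg _) (by positivity [euclNorm_nonneg u, euclNorm_nonneg w])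
    two_ne_zero).1 <| by
    rw [sq_euclNorm_eq_add, Sum.elim_comp_inl, Sum.elim_comp_inr]
    nlinarith [euclNorm_nonneg u, euclNorm_nonneg w]

theorem euclNorm_sumElim_zero (u : a → ℝ) : euclNorm (Sum.elim u (0 : b → ℝ)) = euclNorm u := by
  simp [euclNorm, dotProduct, Fintype.sum_sum_type]

theorem euclNorm_zero_sumElim (w : b → ℝ) : euclNorm (Sum.elim (0 : a → ℝ) w) = euclNorm w := by
  simp [euclNorm, dotProduct, Fintype.sum_sum_type]

variable {l o : Type*}

theorem mulVec_comp_inl (M : Matrix (l ⊕ o) (a ⊕ b) ℝ) (v : a ⊕ b → ℝ) :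
    (M *ᵥ v) ∘ Sum.inl = M.toBlocks₁₁ *ᵥ (v ∘ Sum.inl) + M.toBlocks₁₂ *ᵥ (v ∘ Sum.inr) := by
  conv_lhs => rw [← fromBlocks_toBlocks M, fromBlocks_mulVec]
  rfl

theorem mulVec_comp_inr (M : Matrix (l ⊕ o) (a ⊕ b) ℝ) (v : a ⊕ b → ℝ) :
    (M *ᵥ v) ∘ Sum.inr = M.toBlocks₂₁ *ᵥ (v ∘ Sum.inl) + M.toBlocks₂₂ *ᵥ (v ∘ Sum.inr) := by
  conv_lhs => rw [← fromBlocks_toBlocks M, fromBlocks_mulVec]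
  rfl

end Sum

section singularValues

variable {m k : Type*} [Fintype m] [Fintype k]

theorem bddAbove_euclNorm_mulVec_unit (M : Matrix m k ℝ) :
    BddAbove {t | ∃ x : k → ℝ, euclNorm x = 1 ∧ t = euclNorm (M *ᵥ x)} := by
  classical
  refine ⟨‖LinearMap.toContinuousLinearMap (toEuclideanLin M)‖, ?_⟩
  rintro t ⟨x, hx, rfl⟩
  have h := (LinearMap.toContinuousLinearMap (toEuclideanLin M)).le_opNorm (WithLp.toLp 2 x)
  rw [← euclNorm_eq_norm x, hx, mul_one] at h
  simpa [euclNorm_eq_norm] using h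

theorem sigmaMax_nonneg (M : Matrix m k ℝ) : 0 ≤ sigmaMax M :=
  Real.sSup_nonneg <| by rintro t ⟨x, -, rfl⟩; exact euclNorm_nonneg _

theorem sigmaMin_le_euclNorm_mulVec (M : Matrix m k ℝ) {x : k → ℝ} (hx : euclNorm x = 1) :
    sigmaMin M ≤ euclNorm (M *ᵥ x) :=
  csInf_le ⟨0, by rintro t ⟨y, -, rfl⟩; exact euclNorm_nonneg _⟩ ⟨x, hx, rfl⟩

theorem sigmaMin_mul_euclNorm_le (M : Matrix m k ℝ) (x : k → ℝ) :
    sigmaMin M * euclNorm x ≤ euclNorm (M *ᵥ x) := by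
  rcases eq_or_ne x 0 with rfl | hx
  · simp [euclNorm_zero]
  have h := sigmaMin_le_euclNorm_mulVec M (euclNorm_inv_smul_self hx)
  rw [mulVec_smul, euclNorm_smul, abs_inv, abs_of_nonneg (euclNorm_nonneg x),
    le_inv_mul_iff₀ (euclNorm_pos hx)] at h
  linarith

theorem euclNorm_mulVec_le_sigmaMax_mul (M : Matrix m k ℝ) (x : k → ℝ) :
    euclNorm (M *ᵥ x) ≤ sigmaMax M * euclNorm x := by
  rcases eq_or_ne x 0 with rfl | hx
  · simp [euclNorm_zero]
  have h := le_csSup (bddAbove_euclNorm_mulVec_unit M) ⟨_, euclNorm_inv_smul_self hx, rfl⟩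
  rw [mulVec_smul, euclNorm_smul, abs_inv, abs_of_nonneg (euclNorm_nonneg x),
    inv_mul_le_iff₀ (euclNorm_pos hx)] at h
  rwa [mul_comm]

theorem sigmaMax_le_of_forall {M : Matrix m k ℝ} {c : ℝ} (hc : 0 ≤ c)
    (h : ∀ x, euclNorm (M *ᵥ x) ≤ c * euclNorm x) : sigmaMax M ≤ c :=
  Real.sSup_le (by rintro t ⟨x, hx, rfl⟩; simpa [hx] using h x) hc

theorem mulVec_injective_of_sigmaMin_pos {M : Matrix m k ℝ} (hM : 0 < sigmaMin M) :
    Function.Injective M.mulVec := by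
  refine (injective_iff_map_eq_zero M.mulVecLin).2 fun x hx => ?_
  by_contra hx0
  have h := sigmaMin_mul_euclNorm_le M x
  rw [← mulVecLin_apply, hx, euclNorm_zero] at h
  exact (mul_pos hM (euclNorm_pos hx0)).not_ge h

end singularValues

section blocks

variable {a b : Type*} [Fintype a] [Fintype b]

theorem euclNorm_mulVec_le_sigmaMax_toBlocks₂₂_mul {M : Matrix (a ⊕ b) (a ⊕ b) ℝ}
    (h21 : M.toBlocks₂₁ = 0) {v : a ⊕ b → ℝ} (hv : (M *ᵥ v) ∘ Sum.inl = 0) :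
    euclNorm (M *ᵥ v) ≤ sigmaMax M.toBlocks₂₂ * euclNorm v := by
  have h : euclNorm (M *ᵥ v) = euclNorm (M.toBlocks₂₂ *ᵥ (v ∘ Sum.inr)) := by
    rw [← pow_left_inj₀ (euclNorm_nonneg _) (euclNorm_nonneg _) two_ne_zero, sq_euclNorm_eq_add,
      hv, mulVec_comp_inr, h21, zero_mulVec, zero_add, euclNorm_zero]
    ring
  rw [h]
  exact (euclNorm_mulVec_le_sigmaMax_mul _ _).trans
    (mul_le_mul_of_nonneg_left (euclNorm_comp_inr_le v) (sigmaMax_nonneg _))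

variable [DecidableEq a] [DecidableEq b] {X : Matrix (a ⊕ b) (a ⊕ b) ℝ}

theorem euclNorm_toBlocks₁₁_mulVec_le (hX : Xᵀ * X = 1) (u : a → ℝ) :
    euclNorm (X.toBlocks₁₁ *ᵥ u) ≤ euclNorm u := by
  have h := euclNorm_comp_inl_le (X *ᵥ Sum.elim u 0)
  rwa [mulVec_comp_inl, euclNorm_mulVec_of_transpose_mul_self hX, euclNorm_sumElim_zero,
    Sum.elim_comp_inl, Sum.elim_comp_inr, mulVec_zero, add_zero] at h

theorem euclNorm_toBlocks₁₂_mulVec_le (hX : Xᵀ * X = 1) (w : b → ℝ) :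
    euclNorm (X.toBlocks₁₂ *ᵥ w) ≤ euclNorm w := by
  have h := euclNorm_comp_inl_le (X *ᵥ Sum.elim 0 w)
  rwa [mulVec_comp_inl, euclNorm_mulVec_of_transpose_mul_self hX, euclNorm_zero_sumElim,
    Sum.elim_comp_inl, Sum.elim_comp_inr, mulVec_zero, zero_add] at h

theorem sigmaMin_toBlocks₁₁_le_one (hX : Xᵀ * X = 1) : sigmaMin X.toBlocks₁₁ ≤ 1 := by
  -- without unit vectors in the domain, `sigmaMin` is `sInf ∅ = 0`
  rcases isEmpty_or_nonempty a with ha | ⟨⟨i⟩⟩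
  · have hempty : {t | ∃ x : a → ℝ, euclNorm x = 1 ∧ t = euclNorm (X.toBlocks₁₁ *ᵥ x)} = ∅ :=
      Set.eq_empty_of_forall_notMem fun t ⟨x, hx, _⟩ => by
        rw [Subsingleton.elim x 0, euclNorm_zero] at hx; exact zero_ne_one hx
    rw [sigmaMin, hempty, Real.sInf_empty]
    exact zero_le_one
  have hunit : euclNorm (Pi.single i 1 : a → ℝ) = 1 := by simp [euclNorm]
  calc sigmaMin X.toBlocks₁₁ ≤ euclNorm (X.toBlocks₁₁ *ᵥ Pi.single i 1) :=
        sigmaMin_le_euclNorm_mulVec _ hunit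
    _ ≤ 1 := (euclNorm_toBlocks₁₁_mulVec_le hX _).trans hunit.le

theorem exists_mulVec_sumElim_comp_inl_eq_zero (hX : Xᵀ * X = 1)
    (hf : 0 < sigmaMin X.toBlocks₁₁) (x : b → ℝ) :
    ∃ z : a → ℝ, (X *ᵥ Sum.elim z x) ∘ Sum.inl = 0 ∧
      sigmaMin X.toBlocks₁₁ * euclNorm z ≤ euclNorm x := by
  obtain ⟨z, hz⟩ := mulVec_surjective_iff_isUnit.2
    (mulVec_injective_iff_isUnit.1 (mulVec_injective_of_sigmaMin_pos hf)) (-(X.toBlocks₁₂ *ᵥ x))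
  refine ⟨z, by rw [mulVec_comp_inl]; simp [hz], ?_⟩
  calc sigmaMin X.toBlocks₁₁ * euclNorm z ≤ euclNorm (X.toBlocks₁₁ *ᵥ z) :=
        sigmaMin_mul_euclNorm_le _ z
    _ = euclNorm (X.toBlocks₁₂ *ᵥ x) := by rw [hz, euclNorm_neg]
    _ ≤ euclNorm x := euclNorm_toBlocks₁₂_mulVec_le hX x

theorem sigmaMax_toBlocks₂₂_le {R N : Matrix (a ⊕ b) (a ⊕ b) ℝ} {σ : a ⊕ b → ℝ} {s : ℝ}
    (hR : R = N * diagonal σ * X) (hN : Nᵀ * N = 1) (hX : Xᵀ * X = 1) (h21 : R.toBlocks₂₁ = 0)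
    (hs : 0 ≤ s) (hσ : ∀ j, |σ (Sum.inr j)| ≤ s) (hf : 0 < sigmaMin X.toBlocks₁₁) :
    sigmaMax R.toBlocks₂₂ ≤ s * (1 + (sigmaMin X.toBlocks₁₁)⁻¹) := by
  set f := sigmaMin X.toBlocks₁₁
  refine sigmaMax_le_of_forall (by positivity) fun x => ?_
  obtain ⟨z, hXz, hz⟩ := exists_mulVec_sumElim_comp_inl_eq_zero hX hf x
  have hσXz : ∀ i, (X *ᵥ Sum.elim z x) i ≠ 0 → |σ i| ≤ s := by
    rintro (i | j) hi
    · exact absurd (congrFun hXz i) hi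
    · exact hσ j
  calc euclNorm (R.toBlocks₂₂ *ᵥ x) = euclNorm ((R *ᵥ Sum.elim z x) ∘ Sum.inr) := by
        rw [mulVec_comp_inr, h21]; simp
    _ ≤ euclNorm (R *ᵥ Sum.elim z x) := euclNorm_comp_inr_le _
    _ = euclNorm (diagonal σ *ᵥ (X *ᵥ Sum.elim z x)) := by
        rw [hR, ← mulVec_mulVec, ← mulVec_mulVec, euclNorm_mulVec_of_transpose_mul_self hN]
    _ ≤ s * euclNorm (X *ᵥ Sum.elim z x) := euclNorm_diagonal_mulVec_le hs hσXz
    _ = s * euclNorm (Sum.elim z x) := by rw [euclNorm_mulVec_of_transpose_mul_self hX]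
    _ ≤ s * (f⁻¹ * euclNorm x + euclNorm x) := by
        gcongr
        exact (euclNorm_sumElim_le z x).trans (by gcongr; rwa [le_inv_mul_iff₀ hf])
    _ = s * (1 + f⁻¹) * euclNorm x := by ring

end blocks

section orthogonal

variable {o l : Type*} [Fintype o] [Fintype l]

theorem submatrix_equiv_mulVec_comp (M : Matrix o o ℝ) (e : l ≃ o) (v : o → ℝ) :
    M.submatrix e e *ᵥ (v ∘ e) = (M *ᵥ v) ∘ e := by
  rw [submatrix_mulVec_equiv, Function.comp_assoc, e.self_comp_symm, Function.comp_id]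

variable [DecidableEq o] [DecidableEq l]

theorem transpose_mul_self_mul {M N : Matrix o o ℝ} (hM : Mᵀ * M = 1) (hN : Nᵀ * N = 1) :
    (M * N)ᵀ * (M * N) = 1 := by
  rw [transpose_mul, Matrix.mul_assoc, ← Matrix.mul_assoc Mᵀ, hM, Matrix.one_mul, hN]

theorem transpose_transpose_mul_transpose {M : Matrix o o ℝ} (hM : Mᵀ * M = 1) :
    Mᵀᵀ * Mᵀ = 1 := by
  rw [transpose_transpose]
  exact mul_eq_one_comm.1 hM

theorem submatrix_mul_diagonal_mul_equiv (N X : Matrix o o ℝ) (σ : o → ℝ) (e : l ≃ o) :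
    (N * diagonal σ * X).submatrix e e = N.submatrix e e * diagonal (σ ∘ e) * X.submatrix e e := by
  rw [← submatrix_diagonal_equiv, submatrix_mul_equiv, submatrix_mul_equiv]

theorem transpose_mul_self_submatrix_equiv {X : Matrix o o ℝ} (hX : Xᵀ * X = 1) (e : l ≃ o) :
    (X.submatrix e e)ᵀ * X.submatrix e e = 1 := by
  rw [transpose_submatrix, submatrix_mul_equiv, hX, submatrix_one_equiv]

end orthogonal

/-- Courant–Fischer: the kernel of `φ` meets the span of the right singular vectors indexed by
`T`. -/
theorem exists_ne_zero_map_eq_zero_mul_euclNorm_le {o p : Type*} [Fintype o] [DecidableEq o]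
    [Fintype p] {R N X : Matrix o o ℝ} {σ : o → ℝ} (hR : R = N * diagonal σ * X)
    (hN : Nᵀ * N = 1) (hX : Xᵀ * X = 1) {T : Finset o} {s : ℝ} (hs : 0 ≤ s)
    (hσ : ∀ i ∈ T, s ≤ σ i) (φ : (o → ℝ) →ₗ[ℝ] (p → ℝ)) (hφ : Fintype.card p < T.card) :
    ∃ v, v ≠ 0 ∧ φ v = 0 ∧ s * euclNorm v ≤ euclNorm (R *ᵥ v) := by
  let ψ := φ.prod (LinearMap.funLeft ℝ ℝ ((↑) : ↥(Tᶜ : Finset o) → o) ∘ₗ X.mulVecLin)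
  have hψ : LinearMap.ker ψ ≠ ⊥ := LinearMap.ker_ne_bot_of_finrank_lt <| by
    have := T.card_le_univ
    simp only [Module.finrank_prod, Module.finrank_fintype_fun_eq_card, Fintype.card_coe,
      Finset.card_compl]
    omega
  obtain ⟨v, hv, hv0⟩ := Submodule.exists_mem_ne_zero_of_ne_bot hψ
  have hXv : ∀ i, (X *ᵥ v) i ≠ 0 → s ≤ σ i := fun i hi => hσ i <| by
    by_contra hiT
    exact hi (congrFun (congrArg Prod.snd hv) ⟨i, Finset.mem_compl.2 hiT⟩)
  refine ⟨v, hv0, congrArg Prod.fst hv, ?_⟩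
  calc s * euclNorm v = s * euclNorm (X *ᵥ v) := by rw [euclNorm_mulVec_of_transpose_mul_self hX]
    _ ≤ euclNorm (diagonal σ *ᵥ (X *ᵥ v)) := mul_euclNorm_le_euclNorm_diagonal_mulVec hs hXv
    _ = euclNorm (R *ᵥ v) := by
        rw [hR, ← mulVec_mulVec, ← mulVec_mulVec, euclNorm_mulVec_of_transpose_mul_self hN]

section trailingBlock

variable {o a b : Type*} [Fintype o] [Fintype a] [Fintype b] [DecidableEq o] (e : a ⊕ b ≃ o)
  {R N X : Matrix o o ℝ} {σ : o → ℝ} {s : ℝ}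

theorem le_sigmaMax_submatrix_toBlocks₂₂ (hR : R = N * diagonal σ * X) (hN : Nᵀ * N = 1)
    (hX : Xᵀ * X = 1) (h21 : (R.submatrix e e).toBlocks₂₁ = 0) {T : Finset o} (hs : 0 ≤ s)
    (hσ : ∀ i ∈ T, s ≤ σ i) (hT : Fintype.card a < T.card) :
    s ≤ sigmaMax (R.submatrix e e).toBlocks₂₂ := by
  obtain ⟨v, hv0, hφv, hv⟩ := exists_ne_zero_map_eq_zero_mul_euclNorm_le hR hN hX hs hσ
    (LinearMap.funLeft ℝ ℝ (e ∘ Sum.inl) ∘ₗ R.mulVecLin) hT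
  have h := euclNorm_mulVec_le_sigmaMax_toBlocks₂₂_mul h21 (v := v ∘ e) <| by
    rw [submatrix_equiv_mulVec_comp]; exact hφv
  rw [submatrix_equiv_mulVec_comp, euclNorm_comp_equiv, euclNorm_comp_equiv] at h
  exact le_of_mul_le_mul_right (hv.trans h) (euclNorm_pos hv0)

theorem sigmaMax_submatrix_toBlocks₂₂_le [DecidableEq a] [DecidableEq b]
    (hR : R = N * diagonal σ * X) (hN : Nᵀ * N = 1) (hX : Xᵀ * X = 1)
    (h21 : (R.submatrix e e).toBlocks₂₁ = 0) (hs : 0 ≤ s)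
    (hσ : ∀ j, |σ (e (Sum.inr j))| ≤ s) (hf : 0 < sigmaMin (X.submatrix e e).toBlocks₁₁) :
    sigmaMax (R.submatrix e e).toBlocks₂₂ ≤
      s * (1 + (sigmaMin (X.submatrix e e).toBlocks₁₁)⁻¹) :=
  sigmaMax_toBlocks₂₂_le (hR ▸ submatrix_mul_diagonal_mul_equiv N X σ e)
    (transpose_mul_self_submatrix_equiv hN e) (transpose_mul_self_submatrix_equiv hX e) h21 hs hσ hf

end trailingBlock

theorem mul_one_add_inv_le_rurv_bound {s f τ ρ : ℝ} (hs : 0 ≤ s) (hf : 0 < f) (hf1 : f ≤ 1)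
    (hτ : 0 < τ) (hτρ : τ ≤ ρ) (hgap : s < f * τ) :
    s * (1 + f⁻¹) ≤ 3 * s * (f⁻¹ ^ 4 * (ρ / τ) ^ 3) / (1 - s ^ 2 / (f ^ 2 * τ ^ 2)) := by
  have hf' : 1 ≤ f⁻¹ := one_le_inv₀ hf |>.2 hf1
  have hρτ : 1 ≤ (ρ / τ) ^ 3 := one_le_pow₀ <| (one_le_div hτ).2 hτρ
  have hratio : s ^ 2 / (f ^ 2 * τ ^ 2) < 1 := by
    rw [div_lt_one (by positivity), ← mul_pow]
    exact pow_lt_pow_left₀ hgap hs two_ne_zero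
  calc s * (1 + f⁻¹) ≤ s * (3 * (f⁻¹ ^ 4 * (ρ / τ) ^ 3)) := by
        gcongr
        nlinarith [le_self_pow₀ hf' (show 4 ≠ 0 by norm_num)]
    _ = 3 * s * (f⁻¹ ^ 4 * (ρ / τ) ^ 3) := by ring
    _ ≤ _ := le_div_self (by positivity) (by linarith)
        (by linarith [show 0 ≤ s ^ 2 / (f ^ 2 * τ ^ 2) by positivity])

/-- RURV, exact arithmetic: with `A = P·Σ·Qᵀ` an SVD, `V` orthogonal,
`X = Qᵀ·Vᵀ`, `f = σ_min(X(1:r,1:r))`, and `A·Vᵀ = U·R` a QR decomposition, if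
`σ_{r+1} < f·σ_r` then
`σ_{r+1} ≤ σ_max(R(r+1:n,r+1:n)) ≤ 3σ_{r+1}·f⁻⁴(σ₁/σ_r)³/(1 − σ_{r+1}²/(f²σ_r²))`. -/
theorem rurv_trailing_block_bound {n : ℕ} (r : ℕ) (hrn : r < n)
    (A P Q V U R : Matrix (Fin n) (Fin n) ℝ) (σ : Fin n → ℝ)
    (hP : Pᵀ * P = 1) (hQ : Qᵀ * Q = 1) (hV : Vᵀ * V = 1) (hU : Uᵀ * U = 1)
    (hσdec : Antitone σ) (hσ0 : ∀ i, 0 ≤ σ i)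
    (hA : A = P * diagonal σ * Qᵀ)
    (hRtri : R.BlockTriangular id)
    (hQR : A * Vᵀ = U * R)
    (hgap : σ ⟨r, hrn⟩ <
      sigmaMin ((Qᵀ * Vᵀ).submatrix (Fin.castLE hrn.le) (Fin.castLE hrn.le)) *
        σ ⟨r - 1, by omega⟩) :
    let f := sigmaMin ((Qᵀ * Vᵀ).submatrix (Fin.castLE hrn.le) (Fin.castLE hrn.le))
    let R22 := R.submatrix
      (fun i : Fin (n - r) => (⟨r + i.val, by have := i.isLt; omega⟩ : Fin n))
      (fun i : Fin (n - r) => (⟨r + i.val, by have := i.isLt; omega⟩ : Fin n))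
    σ ⟨r, hrn⟩ ≤ sigmaMax R22 ∧
    sigmaMax R22 ≤ 3 * σ ⟨r, hrn⟩ *
      (f⁻¹ ^ 4 * (σ ⟨0, by omega⟩ / σ ⟨r - 1, by omega⟩) ^ 3) /
      (1 - σ ⟨r, hrn⟩ ^ 2 / (f ^ 2 * σ ⟨r - 1, by omega⟩ ^ 2)) := by
  intro f R22
  let e : Fin r ⊕ Fin (n - r) ≃ Fin n := finSumFinEquiv.trans (finCongr (by omega))
  have hR22 : R22 = (R.submatrix e e).toBlocks₂₂ := rfl
  have hfe : f = sigmaMin ((Qᵀ * Vᵀ).submatrix e e).toBlocks₁₁ := rfl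
  have hgap' : σ ⟨r, hrn⟩ < f * σ ⟨r - 1, by omega⟩ := hgap
  have hR : R = Uᵀ * P * diagonal σ * (Qᵀ * Vᵀ) := by
    rw [← Matrix.one_mul R, ← hU, Matrix.mul_assoc, ← hQR, hA]
    simp only [Matrix.mul_assoc]
  have hN := transpose_mul_self_mul (transpose_transpose_mul_transpose hU) hP
  have hX := transpose_mul_self_mul (transpose_transpose_mul_transpose hQ)
    (transpose_transpose_mul_transpose hV)
  have h21 : (R.submatrix e e).toBlocks₂₁ = 0 := by
    ext i j
    exact hRtri (show (j : ℕ) < r + i by omega)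
  have hf : 0 < f := pos_of_mul_pos_left ((hσ0 _).trans_lt hgap') (hσ0 _)
  have hτ : 0 < σ ⟨r - 1, by omega⟩ := pos_of_mul_pos_right ((hσ0 _).trans_lt hgap') hf.le
  rw [hR22]
  rw [hfe] at hf hgap' ⊢
  refine ⟨le_sigmaMax_submatrix_toBlocks₂₂ e hR hN hX h21 (T := Finset.Iic ⟨r, hrn⟩) (hσ0 _)
    (fun i hi => hσdec (Finset.mem_Iic.1 hi)) (by simp), ?_⟩
  calc _ ≤ σ ⟨r, hrn⟩ * (1 + (sigmaMin ((Qᵀ * Vᵀ).submatrix e e).toBlocks₁₁)⁻¹) :=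
        sigmaMax_submatrix_toBlocks₂₂_le e hR hN hX h21 (hσ0 _)
          (fun j => (abs_of_nonneg (hσ0 _)).trans_le (hσdec (show r ≤ r + j by omega))) hf
    _ ≤ _ := mul_one_add_inv_le_rurv_bound (hσ0 _) hf
        (sigmaMin_toBlocks₁₁_le_one (transpose_mul_self_submatrix_equiv hX e)) hτ
        (hσdec (Nat.zero_le _)) hgap'
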